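/- arXiv:2205.06127 — 5 statements merged into one kernel-verified Lean document; each statement's English description precedes it below -/
import Mathlib

section
/- Let φ be a conjunction of literals over variables x_1,...,x_n and D an α-log-Lipschitz distribution on {0,1}^n. If Pr_{x∼D}[x ⊨ φ] < (1+α)^{-d}, then φ contains at least d literals (over at least d distinct variables). -/
open Finset

/-- Probability of an event under a weight function `D` on `ι → Bool`. -/
noncomputable def pr {ι : Type*} [Fintype ι] [DecidableEq ι] (D : (ι → Bool) → ℝ)
    (P : (ι → Bool) → Prop) : ℝ := by
  classical exact ∑ x, if P x then D x else 0

/-- `D` is a probability distribution with full support. -/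
def IsDistribution {ι : Type*} [Fintype ι] [DecidableEq ι] (D : (ι → Bool) → ℝ) : Prop :=
  (∀ x, 0 < D x) ∧ ∑ x, D x = 1

/-- `D` is `α`-log-Lipschitz: points at Hamming distance 1 have log-probabilities
within `log α`. -/
def LogLipschitz {ι : Type*} [Fintype ι] [DecidableEq ι] (α : ℝ) (D : (ι → Bool) → ℝ) : Prop :=
  ∀ x x' : ι → Bool, hammingDist x x' = 1 →
    |Real.log (D x) - Real.log (D x')| ≤ Real.log α

/-- A conjunction of literals over `{0,1}ⁿ`: `φ i = some b` means the literal
requiring `x i = b` occurs; each variable appears at most once. -/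
def SatConj {n : ℕ} (φ : Fin n → Option Bool) (x : Fin n → Bool) : Prop :=
  ∀ i b, φ i = some b → x i = b

/-- Number of literals of a conjunction. -/
def numLits {n : ℕ} (φ : Fin n → Option Bool) : ℕ :=
  (Finset.univ.filter (fun i => (φ i).isSome)).card

/-! Dropping the literal `x i = b` from an event that ignores coordinate `i` multiplies its
mass by at most `1 + α`: flipping coordinate `i` maps the points with `x i ≠ b` injectively to
points with `x i = b`, losing a factor of at most `α` each. So a conjunction of `k` literals has
mass at least `(1 + α)⁻ᵏ`. -/

section

variable {ι : Type*} [Fintype ι] [DecidableEq ι]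

lemma pr_eq_pr_and_add_pr_not_and (D : (ι → Bool) → ℝ) (P Q : (ι → Bool) → Prop) :
    pr D P = pr D (fun x => Q x ∧ P x) + pr D (fun x => ¬Q x ∧ P x) := by
  simp only [pr, ← sum_add_distrib]
  refine sum_congr rfl fun x _ => ?_
  by_cases hP : P x <;> by_cases hQ : Q x <;> simp [hP, hQ]

lemma LogLipschitz.le_mul_of_hammingDist_eq_one {α : ℝ} {D : (ι → Bool) → ℝ}
    (hL : LogLipschitz α D) (hα : 0 < α) (hpos : ∀ x, 0 < D x) {x y : ι → Bool}
    (h : hammingDist x y = 1) : D x ≤ α * D y := by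
  have hlog : Real.log (D x) ≤ Real.log (α * D y) := by
    rw [Real.log_mul hα.ne' (hpos y).ne']
    linarith [(abs_le.1 (hL x y h)).2]
  exact (Real.log_le_log_iff (hpos x) (mul_pos hα (hpos y))).1 hlog

def flipAt (i : ι) : Equiv.Perm (ι → Bool) :=
  Function.Involutive.toPerm (fun x => Function.update x i (!x i)) fun x => by simp

omit [Fintype ι] in
lemma flipAt_apply (i : ι) (x : ι → Bool) : flipAt i x = Function.update x i (!x i) := rfl

lemma hammingDist_flipAt (i : ι) (x : ι → Bool) : hammingDist x (flipAt i x) = 1 := by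
  rw [hammingDist, card_eq_one]
  refine ⟨i, ?_⟩
  ext j
  by_cases hj : j = i <;> simp [flipAt_apply, Function.update_apply, hj]

lemma LogLipschitz.pr_le_one_add_mul_pr_and_eq {α : ℝ} {D : (ι → Bool) → ℝ}
    (hL : LogLipschitz α D) (hα : 0 < α) (hpos : ∀ x, 0 < D x) {P : (ι → Bool) → Prop}
    {i : ι} {b : Bool} (hP : ∀ x, P x → P (Function.update x i b)) :
    pr D P ≤ (1 + α) * pr D (fun x => x i = b ∧ P x) := by
  have hflip : pr D (fun x => x i ≠ b ∧ P x) ≤ α * pr D (fun x => x i = b ∧ P x) := by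
    simp only [pr, mul_sum]
    conv_rhs => rw [← Equiv.sum_comp (flipAt i)]
    refine sum_le_sum fun x _ => ?_
    by_cases hx : x i ≠ b ∧ P x
    · have hb : (!x i) = b := Bool.not_eq_iff.2 hx.1
      have hflipx : flipAt i x i = b ∧ P (flipAt i x) := by
        simp only [flipAt_apply, hb, Function.update_self, true_and]
        exact hP x hx.2
      rw [if_pos hx, if_pos hflipx]
      exact hL.le_mul_of_hammingDist_eq_one hα hpos (hammingDist_flipAt i x)
    · rw [if_neg hx]
      split_ifs
      exacts [mul_nonneg hα.le (hpos _).le, by simp]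
  rw [pr_eq_pr_and_add_pr_not_and D P (fun x => x i = b)]
  linarith

lemma LogLipschitz.inv_one_add_pow_card_le_pr {α : ℝ} {D : (ι → Bool) → ℝ}
    (hL : LogLipschitz α D) (hα : 0 < α) (hD : IsDistribution D) (b : ι → Bool)
    (s : Finset ι) : ((1 + α) ^ #s)⁻¹ ≤ pr D (fun x => ∀ i ∈ s, x i = b i) := by
  induction s using Finset.induction_on with
  | empty => simp [pr, hD.2]
  | insert a s ha ih =>
    have hstable : ∀ x : ι → Bool, (∀ i ∈ s, x i = b i) →
        ∀ i ∈ s, Function.update x a (b a) i = b i := by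
      intro x hx i hi
      rw [Function.update_of_ne (ne_of_mem_of_not_mem hi ha), hx i hi]
    have hstep := hL.pr_le_one_add_mul_pr_and_eq hα hD.1 hstable
    simp only [forall_mem_insert, card_insert_of_notMem ha, pow_succ, mul_inv]
    rw [← div_eq_mul_inv, div_le_iff₀ (by positivity)]
    linarith
end

lemma satConj_eq_forall_mem {n : ℕ} (φ : Fin n → Option Bool) :
    SatConj φ = fun x => ∀ i ∈ univ.filter (fun i => (φ i).isSome), x i = (φ i).getD false := by
  ext x
  simp only [SatConj, mem_filter, mem_univ, true_and]
  refine forall_congr' fun i => ?_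
  cases φ i <;> simp

theorem conjunction_small_mass_implies_long {n : ℕ} (α : ℝ) (hα : 1 ≤ α)
    (D : (Fin n → Bool) → ℝ) (hD : IsDistribution D) (hL : LogLipschitz α D)
    (φ : Fin n → Option Bool) (d : ℕ)
    (h : pr D (SatConj φ) < ((1 + α) ^ d)⁻¹) :
    d ≤ numLits φ := by
  have hmass : ((1 + α) ^ numLits φ)⁻¹ ≤ pr D (SatConj φ) := by
    rw [satConj_eq_forall_mem]
    exact hL.inv_one_add_pow_card_le_pr (by linarith) hD _ _
  have hpow : (1 + α) ^ d < (1 + α) ^ numLits φ :=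
    (inv_lt_inv₀ (by positivity) (by positivity)).1 (hmass.trans_lt h)
  exact ((pow_lt_pow_iff_right₀ (by linarith)).1 hpow).le
end

section
/- Let D be an α-log-Lipschitz distribution on {0,1}^n and φ a conjunction of d literals. Set η = 1/(1+α). For all 0 < ε < 1/2 and ρ ≥ 0, if d ≥ max{(4/η²) log(1/ε), 2ρ/η}, then the probability over x ∼ D that there exists y within Hamming distance ρ of x with y ⊨ φ is at most ε. -/
/-!
Fix a point `z` satisfying every literal of `φ`, let `S` be the set of its `d` variables and
`V x` the number of coordinates in `S` where `x` disagrees with `z`. If some `y ⊨ φ` lies within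
distance `ρ` of `x` then `V x ≤ ρ`, so by Markov's inequality the event has probability at most
`2^ρ · E[2^(-V)]`. For `i ∈ S`, pairing each `x` with `x i = z i` with its flip at `i`,
log-Lipschitzness gives the flipped point, which violates the literal at `i`, conditional
probability at least
`η = 1/(1+α)`; so each literal multiplies `E[2^(-V)]` by at most `1 - η/2`. Finally
`2^ρ (1 - η/2)^d ≤ exp (ρ log 2 - dη/2) ≤ ε` by the two lower bounds on `d`.
-/

open Finset

theorem hammingDist_update_of_ne {ι : Type*} [Fintype ι] [DecidableEq ι] {β : ι → Type*}
    [∀ i, DecidableEq (β i)] (x : ∀ i, β i) {i : ι} {c : β i} (h : x i ≠ c) :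
    hammingDist x (Function.update x i c) = 1 := by
  rw [hammingDist, card_eq_one]
  refine ⟨i, eq_singleton_iff_unique_mem.2 ⟨by simpa using h, fun j hj => ?_⟩⟩
  by_contra hji
  simp [Function.update_of_ne hji] at hj

section Cube

variable {ι : Type*} [DecidableEq ι]

theorem card_filter_update_ne_of_notMem {β : Type*} [DecidableEq β] (x z : ι → β)
    {S : Finset ι} {i : ι} (hi : i ∉ S) (c : β) :
    #{j ∈ S | Function.update x i c j ≠ z j} = #{j ∈ S | x j ≠ z j} := by
  refine congrArg card (filter_congr fun j hj => ?_)
  rw [Function.update_of_ne (ne_of_mem_of_not_mem hj hi)]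

theorem card_filter_insert_ne {β : Type*} [DecidableEq β] (x z : ι → β) {S : Finset ι} {i : ι}
    (hi : i ∉ S) :
    #{j ∈ insert i S | x j ≠ z j} = #{j ∈ S | x j ≠ z j} + if x i ≠ z i then 1 else 0 := by
  rw [filter_insert]
  split_ifs
  · exact card_insert_of_notMem fun h => hi (mem_filter.1 h).1
  · rfl

variable [Fintype ι]

theorem sum_eq_sum_filter_add_update_not {M : Type*} [AddCommMonoid M]
    (F : (ι → Bool) → M) (i : ι) (b : Bool) :
    ∑ x, F x = ∑ x with x i = b, (F x + F (Function.update x i (!b))) := by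
  rw [sum_add_distrib, ← sum_filter_add_sum_filter_not univ (fun x => x i = b)]
  congr 1
  have update_not_eq {x : ι → Bool} (hx : ¬x i = b) : Function.update x i (!b) = x :=
    Function.update_eq_self_iff.2 (Bool.eq_not.2 hx).symm
  refine sum_nbij' (fun x => Function.update x i b) (fun x => Function.update x i (!b))
    (by simp) (by simp) (fun x hx => ?_) (fun x _ => by simp_all) (fun x hx => ?_)
  all_goals simp [Function.update_idem, update_not_eq (mem_filter.1 hx).2]

theorem add_mul_le_of_le_mul {a c α t : ℝ} (hα : 0 < α) (ht : t ≤ 1) (h : a ≤ α * c) :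
    a + t * c ≤ (1 - (1 - t) / (1 + α)) * (a + c) := by
  have key : (1 - (1 - t) / (1 + α)) * (a + c) - (a + t * c) =
      (1 - t) * (α * c - a) / (1 + α) := by
    field_simp
    ring
  have : 0 ≤ (1 - t) * (α * c - a) / (1 + α) :=
    div_nonneg (mul_nonneg (by linarith) (by linarith)) (by linarith)
  linarith

theorem LogLipschitz.le_mul {α : ℝ} (hα : 0 < α) {D : (ι → Bool) → ℝ} (hD : ∀ x, 0 < D x)
    (hL : LogLipschitz α D) {x x' : ι → Bool} (h : hammingDist x x' = 1) :
    D x ≤ α * D x' := by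
  rw [← Real.log_le_log_iff (hD x) (mul_pos hα (hD x')), Real.log_mul hα.ne' (hD x').ne']
  linarith [(abs_le.1 (hL x x' h)).2]

theorem pow_mul_pr_le_sum {D : (ι → Bool) → ℝ} (hD : ∀ x, 0 ≤ D x) {t : ℝ} (ht0 : 0 ≤ t)
    (ht1 : t ≤ 1) {P : (ι → Bool) → Prop} {V : (ι → Bool) → ℕ} {ρ : ℕ}
    (hPV : ∀ x, P x → V x ≤ ρ) : t ^ ρ * pr D P ≤ ∑ x, D x * t ^ V x := by
  rw [pr, mul_sum]
  refine sum_le_sum fun x _ => ?_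
  split_ifs with hx
  · rw [mul_comm]
    exact mul_le_mul_of_nonneg_left (pow_le_pow_of_le_one ht0 ht1 (hPV x hx)) (hD x)
  · rw [mul_zero]
    exact mul_nonneg (hD x) (pow_nonneg ht0 _)

theorem LogLipschitz.sum_mul_pow_card_filter_insert_ne_le {α : ℝ} (hα : 0 < α)
    {D : (ι → Bool) → ℝ} (hD : ∀ x, 0 < D x) (hL : LogLipschitz α D) {t : ℝ} (ht0 : 0 ≤ t)
    (ht1 : t ≤ 1) (z : ι → Bool) {S : Finset ι} {i : ι} (hi : i ∉ S) :
    ∑ x, D x * t ^ #{j ∈ insert i S | x j ≠ z j} ≤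
      (1 - (1 - t) / (1 + α)) * ∑ x, D x * t ^ #{j ∈ S | x j ≠ z j} := by
  rw [sum_eq_sum_filter_add_update_not _ i (z i),
    sum_eq_sum_filter_add_update_not (fun x => D x * t ^ #{j ∈ S | x j ≠ z j}) i (z i), mul_sum]
  refine sum_le_sum fun x hx => ?_
  have hxi : x i = z i := (mem_filter.1 hx).2
  have hDx := hL.le_mul hα hD (hammingDist_update_of_ne x (i := i) (c := !z i) (by simp [hxi]))
  rw [card_filter_insert_ne _ _ hi, card_filter_insert_ne _ _ hi,
    card_filter_update_ne_of_notMem _ _ hi, if_neg (not_not.2 hxi), if_pos (by simp), add_zero]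
  set x' := Function.update x i (!z i)
  calc D x * t ^ #{j ∈ S | x j ≠ z j} + D x' * t ^ (#{j ∈ S | x j ≠ z j} + 1)
      = t ^ #{j ∈ S | x j ≠ z j} * (D x + t * D x') := by ring
    _ ≤ t ^ #{j ∈ S | x j ≠ z j} * ((1 - (1 - t) / (1 + α)) * (D x + D x')) :=
      mul_le_mul_of_nonneg_left (add_mul_le_of_le_mul hα ht1 hDx) (pow_nonneg ht0 _)
    _ = _ := by ring

theorem LogLipschitz.sum_mul_pow_card_filter_ne_le {α : ℝ} (hα : 0 < α)
    {D : (ι → Bool) → ℝ} (hD : IsDistribution D) (hL : LogLipschitz α D) {t : ℝ} (ht0 : 0 ≤ t)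
    (ht1 : t ≤ 1) (z : ι → Bool) (S : Finset ι) :
    ∑ x, D x * t ^ #{j ∈ S | x j ≠ z j} ≤ (1 - (1 - t) / (1 + α)) ^ #S := by
  have hc : 0 ≤ 1 - (1 - t) / (1 + α) :=
    sub_nonneg.2 ((div_le_one (by linarith)).2 (by linarith))
  induction S using Finset.induction_on with
  | empty => simp [hD.2]
  | insert i S hi ih =>
    calc ∑ x, D x * t ^ #{j ∈ insert i S | x j ≠ z j}
        ≤ (1 - (1 - t) / (1 + α)) * ∑ x, D x * t ^ #{j ∈ S | x j ≠ z j} :=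
          hL.sum_mul_pow_card_filter_insert_ne_le hα hD.1 ht0 ht1 z hi
      _ ≤ (1 - (1 - t) / (1 + α)) * (1 - (1 - t) / (1 + α)) ^ #S := by gcongr
      _ = (1 - (1 - t) / (1 + α)) ^ #(insert i S) := by rw [card_insert_of_notMem hi, pow_succ']

end Cube

theorem one_sub_half_pow_le_half_pow_mul {η ε : ℝ} (hη0 : 0 < η) (hη : η ≤ 1 / 2) (hε : 0 < ε)
    {d ρ : ℕ} (hdε : 4 / η ^ 2 * Real.log (1 / ε) ≤ d) (hdρ : 2 * ρ / η ≤ d) :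
    (1 - η / 2) ^ d ≤ (1 / 2) ^ ρ * ε := by
  rw [div_le_iff₀ hη0] at hdρ
  rw [div_mul_eq_mul_div, div_le_iff₀ (by positivity), one_div, Real.log_inv] at hdε
  have hlog_sub : Real.log (1 - η / 2) ≤ -(η / 2) := by
    linarith [Real.log_le_sub_one_of_pos (show 0 < 1 - η / 2 by linarith)]
  have hlog_two : Real.log 2 < 3 / 4 := by linarith [Real.log_two_lt_d9]
  rw [← Real.log_le_log_iff (pow_pos (by linarith) _) (by positivity),
    Real.log_mul (by positivity) hε.ne', Real.log_pow, Real.log_pow, one_div, Real.log_inv]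
  nlinarith [mul_le_mul_of_nonneg_left hlog_sub (Nat.cast_nonneg d : (0 : ℝ) ≤ d),
    mul_le_mul_of_nonneg_right hdρ (Real.log_nonneg one_le_two)]

theorem card_filter_ne_getD_le_hammingDist {n : ℕ} {φ : Fin n → Option Bool}
    {y : Fin n → Bool} (hy : SatConj φ y) (x : Fin n → Bool) :
    #{j ∈ {i | (φ i).isSome} | x j ≠ (φ j).getD false} ≤ hammingDist x y := by
  refine card_le_card fun j hj => ?_
  simp only [mem_filter, mem_univ, true_and] at hj
  obtain ⟨hsome, hxj⟩ := hj
  obtain ⟨b, hb⟩ := Option.isSome_iff_exists.1 (by simpa using hsome)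
  simp only [hb, Option.getD_some] at hxj
  simpa [hy j b hb] using hxj

theorem conjunction_expansion_bound_general {n : ℕ} (α : ℝ) (hα : 1 ≤ α)
    (D : (Fin n → Bool) → ℝ) (hD : IsDistribution D) (hL : LogLipschitz α D)
    (φ : Fin n → Option Bool) (d ρ : ℕ) (hd : numLits φ = d)
    (ε : ℝ) (hε0 : 0 < ε)
    (hdge : (d : ℝ) ≥ max ((4 / (1 / (1 + α)) ^ 2) * Real.log (1 / ε))
        (2 * (ρ : ℝ) / (1 / (1 + α)))) :
    pr D (fun x => ∃ y, hammingDist x y ≤ ρ ∧ SatConj φ y) ≤ ε := by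
  have hη0 : 0 < 1 / (1 + α) := by positivity
  have hη : 1 / (1 + α) ≤ 1 / 2 := one_div_le_one_div_of_le two_pos (by linarith)
  have hmarkov := pow_mul_pr_le_sum (fun x => (hD.1 x).le) (t := 1 / 2) (by norm_num)
    (by norm_num) (P := fun x => ∃ y, hammingDist x y ≤ ρ ∧ SatConj φ y)
    fun x ⟨y, hxy, hy⟩ => (card_filter_ne_getD_le_hammingDist hy x).trans hxy
  have hmoment := hL.sum_mul_pow_card_filter_ne_le (by linarith) hD (t := 1 / 2) (by norm_num)
    (by norm_num) (fun i => (φ i).getD false) {i | (φ i).isSome}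
  rw [show 1 - (1 - 1 / 2) / (1 + α) = 1 - 1 / (1 + α) / 2 by ring] at hmoment
  have hnum := one_sub_half_pow_le_half_pow_mul hη0 hη hε0 (max_le_iff.1 hdge).1
    (max_le_iff.1 hdge).2
  rw [← hd] at hnum
  exact le_of_mul_le_mul_left (hmarkov.trans (hmoment.trans hnum)) (by positivity)

theorem conjunction_expansion_bound {n : ℕ} (α : ℝ) (hα : 1 ≤ α)
    (D : (Fin n → Bool) → ℝ) (hD : IsDistribution D) (hL : LogLipschitz α D)
    (φ : Fin n → Option Bool) (d ρ : ℕ) (hd : numLits φ = d)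
    (ε : ℝ) (hε0 : 0 < ε) (hε : ε < 1 / 2)
    (hdge : (d : ℝ) ≥ max ((4 / (1 / (1 + α)) ^ 2) * Real.log (1 / ε))
        (2 * (ρ : ℝ) / (1 / (1 + α)))) :
    pr D (fun x => ∃ y, hammingDist x y ≤ ρ ∧ SatConj φ y) ≤ ε :=
  conjunction_expansion_bound_general α hα D hD hL φ d ρ hd ε hε0 hdge
end

section
/- Let φ be a k-CNF formula over n variables and let M be a maximal set of pairwise variable-disjoint clauses of φ, with I_M the set of variables appearing in M. Then φ is logically equivalent to the disjunction over all assignments a : I_M → {0,1} of the formula (φ|_a ∧ ⋀_{i ∈ I_M} l_i^a), where φ|_a is the restriction of φ under a and l_i^a = x_i if a(i)=1 and ¬x_i otherwise; moreover each φ|_a is a (k−1)-CNF formula, and distinct disjuncts are mutually exclusive (no assignment satisfies two of them). -/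
open Finset

/-- A CNF formula over `{0,1}ⁿ`: a finite set of clauses, each clause a finite
set of literals `(i, b)` requiring `x i = b`. -/
abbrev CNF (n : ℕ) := Finset (Finset (Fin n × Bool))

/-- `x` satisfies the CNF `φ`: every clause contains a true literal. -/
def SatCNF {n : ℕ} (φ : CNF n) (x : Fin n → Bool) : Prop :=
  ∀ C ∈ φ, ∃ l ∈ C, x l.1 = l.2

/-- `φ` is a `k`-CNF: every clause has at most `k` literals. -/
def IsKCNF {n : ℕ} (k : ℕ) (φ : CNF n) : Prop := ∀ C ∈ φ, C.card ≤ k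

/-- The variables mentioned by a clause. -/
def clauseVars {n : ℕ} (C : Finset (Fin n × Bool)) : Finset (Fin n) :=
  C.image Prod.fst

/-- The restriction of `φ` under the partial assignment given by `a` on the
variables in `I`: clauses containing a literal made true by `a` are deleted,
and literals on variables of `I` are removed from the remaining clauses. -/
noncomputable def restrictCNF {n : ℕ} (φ : CNF n) (I : Finset (Fin n))
    (a : Fin n → Bool) : CNF n := by
  classical
  exact (φ.filter (fun C => ¬ ∃ l ∈ C, l.1 ∈ I ∧ a l.1 = l.2)).image
      (fun C => C.filter (fun l => l.1 ∉ I))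

theorem kCNF_case_split_on_maximal_matching {n k : ℕ} (hk : 1 ≤ k)
    (φ : CNF n) (hφ : IsKCNF k φ)
    (M : Finset (Finset (Fin n × Bool))) (hM : M ⊆ φ)
    (hdisj : ∀ C ∈ M, ∀ C' ∈ M, C ≠ C' → Disjoint (clauseVars C) (clauseVars C'))
    (hmax : ∀ C ∈ φ, ∃ C' ∈ M, ¬ Disjoint (clauseVars C) (clauseVars C')) :
    -- φ is equivalent to the disjunction over assignments of the variables
    -- of M of the restricted formulas together with the literals fixed by a
    (∀ x : Fin n → Bool,
      SatCNF φ x ↔ ∃ a : Fin n → Bool,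
        SatCNF (restrictCNF φ (M.biUnion clauseVars) a) x ∧
          ∀ i ∈ M.biUnion clauseVars, x i = a i) ∧
    -- each restriction is a (k-1)-CNF formula
    (∀ a : Fin n → Bool, IsKCNF (k - 1) (restrictCNF φ (M.biUnion clauseVars) a)) ∧
    -- the disjuncts are mutually exclusive: no point satisfies the disjuncts
    -- of two assignments that differ on the variables of M
    (∀ x a b : Fin n → Bool,
      (SatCNF (restrictCNF φ (M.biUnion clauseVars) a) x ∧
        ∀ i ∈ M.biUnion clauseVars, x i = a i) →
      (SatCNF (restrictCNF φ (M.biUnion clauseVars) b) x ∧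
        ∀ i ∈ M.biUnion clauseVars, x i = b i) →
      ∀ i ∈ M.biUnion clauseVars, a i = b i) := by
  classical
  set I := M.biUnion clauseVars with hI
  refine ⟨?_, ?_, ?_⟩
  · intro x
    constructor
    · intro hx
      refine ⟨x, ?_, fun i _ => rfl⟩
      intro D hD
      simp only [restrictCNF, Finset.mem_image, Finset.mem_filter] at hD
      obtain ⟨C, ⟨hCφ, hCkill⟩, rfl⟩ := hD
      obtain ⟨l, hlC, hlx⟩ := hx C hCφ
      refine ⟨l, Finset.mem_filter.2 ⟨hlC, ?_⟩, hlx⟩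
      intro hlI
      exact hCkill ⟨l, hlC, hlI, hlx⟩
    · rintro ⟨a, hsat, hagree⟩
      intro C hCφ
      by_cases hkill : ∃ l ∈ C, l.1 ∈ I ∧ a l.1 = l.2
      · obtain ⟨l, hlC, hlI, hla⟩ := hkill
        exact ⟨l, hlC, (hagree l.1 hlI).trans hla⟩
      · have hD : C.filter (fun l => l.1 ∉ I) ∈ restrictCNF φ I a := by
          simp only [restrictCNF, Finset.mem_image]
          exact ⟨C, Finset.mem_filter.2 ⟨hCφ, hkill⟩, rfl⟩
        obtain ⟨l, hl, hlx⟩ := hsat _ hD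
        exact ⟨l, (Finset.mem_filter.1 hl).1, hlx⟩
  · intro a D hD
    simp only [restrictCNF, Finset.mem_image, Finset.mem_filter] at hD
    obtain ⟨C, ⟨hCφ, -⟩, rfl⟩ := hD
    obtain ⟨C', hC'M, hnd⟩ := hmax C hCφ
    rw [Finset.not_disjoint_iff] at hnd
    obtain ⟨i, hiC, hiC'⟩ := hnd
    obtain ⟨l, hlC, hli⟩ := Finset.mem_image.1 hiC
    have hlI : l.1 ∈ I := by
      rw [hI]
      exact Finset.mem_biUnion.2 ⟨C', hC'M, hli ▸ hiC'⟩
    have hlt : (C.filter (fun l => l.1 ∉ I)).card < C.card := by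
      refine Finset.card_lt_card ?_
      refine ⟨Finset.filter_subset _ _, fun hsub => ?_⟩
      have := Finset.mem_filter.1 (hsub hlC)
      exact this.2 hlI
    exact Nat.le_sub_one_of_lt (lt_of_lt_of_le hlt (hφ C hCφ))
  · rintro x a b ⟨-, ha⟩ ⟨-, hb⟩ i hi
    rw [← ha i hi, hb i hi]
end

section
/- For every α ≥ 1 and k ≥ 1 there exist constants C_1 > 0 and C_2, C_3, C_4 ≥ 0 (depending only on α and k) such that for every n, every k-CNF formula φ over n variables, and every α-log-Lipschitz distribution D on {0,1}^n: if Pr_{x∼D}[x ⊨ φ] < C_1 ε^{C_2} min{ε^{C_3}, n^{-C_4}}, then Pr_{x∼D}[∃ z ∈ B_{log n}(x) with z ⊨ φ] ≤ ε, for all 0 < ε < 1/2. -/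
open Finset

/-!
Let `x` lie within Hamming distance `R` of a solution of `φ` and let `z` be a nearest solution.
Every coordinate where `x` and `z` differ is critical for `z` (flipping it alone falsifies `φ`),
so `x` is obtained from `z` by flipping a set of at most `R` critical coordinates, and
`D x ≤ α ^ R * D z`. For `0 < t ≤ 1` the sets of at most `R` critical coordinates of `z`
number at most `(1 + t) ^ c(z) / t ^ R`, where `c(z)` is the number of critical coordinates.
Choosing `(1 + t) ^ 2 ≤ β ^ (1 / k)` with `β = (1 + α) / α`, Cauchy–Schwarz and the PPZ
inequality `∑ z, D z * β ^ (c(z) / k) ≤ 1` give `Pr[ball] ≤ (α / t) ^ R * √Pr[φ]`, and for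
`R = log₂ n` the factor `(α / t) ^ (2 * R)` is a power of `n`.

For the PPZ inequality, reveal the coordinates in the order given by a permutation `σ`.
Given the earlier coordinates, each value of the next one has conditional probability at most
`α / (1 + α)`, so an induction over the revealed prefix gives `∑ z, D z * β ^ d(z) ≤ 1`, where
`d(z)` counts the coordinates of `z` pinned down, among solutions, by the earlier ones.
A critical coordinate revealed last among the variables of a clause it falsifies is pinned
down; for a random `σ` this happens with probability at least `1 / k`, and Jensen's
inequality turns the average of `β ^ d(z)` over `σ` into `β ^ (c(z) / k)`.
-/

open Function

lemma pr_eq_sum_filter {ι : Type*} [Fintype ι] [DecidableEq ι] (D : (ι → Bool) → ℝ)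
    (P : (ι → Bool) → Prop) [DecidablePred P] : pr D P = ∑ x with P x, D x := by
  rw [pr, sum_filter]
  -- `pr` decides `P` classically
  convert rfl

section Hamming

variable {ι : Type*} [Fintype ι] [DecidableEq ι]

lemma hammingDist_update_self {y : ι → Bool} {i : ι} {b : Bool} (hb : b ≠ y i) :
    hammingDist (update y i b) y = 1 := by
  rw [hammingDist, card_eq_one]
  refine ⟨i, ext fun j => ?_⟩
  by_cases hj : j = i
  · subst hj
    simpa using hb
  · simp [hj]

lemma hammingDist_update_lt {x z : ι → Bool} {v : ι} (hv : x v ≠ z v) :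
    hammingDist x (update z v (x v)) < hammingDist x z := by
  refine card_lt_card ((ssubset_iff_of_subset fun i hi => ?_).2 ⟨v, ?_, ?_⟩)
  · simp only [mem_filter, mem_univ, true_and] at hi ⊢
    rwa [update_of_ne (by rintro rfl; simp at hi)] at hi
  · simpa using hv
  · simp

def flipOn (U : Finset ι) (z : ι → Bool) : ι → Bool := U.piecewise (fun i => !z i) z

lemma flipOn_filter_ne (x z : ι → Bool) : flipOn {i | x i ≠ z i} z = x := by
  ext i
  by_cases h : x i = z i
  · rw [flipOn, piecewise_eq_of_notMem _ _ _ (by simpa using h), h]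
  · rw [flipOn, piecewise_eq_of_mem _ _ _ (by simpa using h), (Bool.eq_not.2 h).symm]

variable {α : ℝ} {D : (ι → Bool) → ℝ}

lemma LogLipschitz.apply_update_le (hL : LogLipschitz α D) (hα : 1 ≤ α) (hD : ∀ x, 0 < D x)
    (y : ι → Bool) (i : ι) (b : Bool) : D (update y i b) ≤ α * D y := by
  by_cases hb : b = y i
  · rw [hb, update_eq_self]
    exact le_mul_of_one_le_left (hD y).le hα
  · have hlog := (le_abs_self _).trans (hL _ _ (hammingDist_update_self hb))
    rw [← Real.log_le_log_iff (hD _) (mul_pos (by linarith) (hD y)), Real.log_mul (by positivity) (hD y).ne']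
    linarith

lemma LogLipschitz.apply_piecewise_le (hL : LogLipschitz α D) (hα : 1 ≤ α) (hD : ∀ x, 0 < D x)
    (U : Finset ι) (x y : ι → Bool) : D (U.piecewise x y) ≤ α ^ #U * D y := by
  induction U using Finset.induction_on with
  | empty => simp
  | insert a U ha ih =>
    rw [piecewise_insert, card_insert_of_notMem ha, pow_succ', mul_assoc]
    exact (hL.apply_update_le hα hD _ _ _).trans (by gcongr)

lemma sum_flipOn_powerset_le (hL : LogLipschitz α D) (hα : 1 ≤ α) (hD : ∀ x, 0 < D x)
    {t : ℝ} (ht0 : 0 < t) (ht1 : t ≤ 1) (C : Finset ι) (z : ι → Bool) (R : ℕ) :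
    ∑ U ∈ C.powerset with #U ≤ R, D (flipOn U z) ≤ (α / t) ^ R * (1 + t) ^ #C * D z := by
  calc ∑ U ∈ C.powerset with #U ≤ R, D (flipOn U z)
      ≤ ∑ U ∈ C.powerset with #U ≤ R, (α / t) ^ R * D z * t ^ #U := by
        refine sum_le_sum fun U hU => ?_
        calc D (flipOn U z) ≤ α ^ #U * D z := hL.apply_piecewise_le hα hD U _ z
          _ ≤ α ^ R * D z := by
            gcongr
            exacts [(hD z).le, (mem_filter.1 hU).2]
          _ = (α / t) ^ R * D z * t ^ R := by
            rw [div_pow]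
            field_simp
          _ ≤ (α / t) ^ R * D z * t ^ #U :=
            mul_le_mul_of_nonneg_left (pow_le_pow_of_le_one ht0.le ht1 (mem_filter.1 hU).2)
              (mul_pos (by positivity) (hD z)).le
    _ ≤ ∑ U ∈ C.powerset, (α / t) ^ R * D z * t ^ #U :=
        sum_le_sum_of_subset_of_nonneg (filter_subset _ _) fun U _ _ =>
          (mul_pos (mul_pos (by positivity) (hD z)) (by positivity)).le
    _ = (α / t) ^ R * (1 + t) ^ #C * D z := by
        rw [← mul_sum, add_comm 1 t, ← sum_pow_mul_eq_add_pow t 1 C]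
        simp only [one_pow, mul_one]
        ring

end Hamming

section Cylinder

variable {ι : Type*} {m : ℕ}

def AgreeBelow (σ : ι ≃ Fin m) (j : ℕ) (y z : ι → Bool) : Prop :=
  ∀ u, (σ u : ℕ) < j → z u = y u

def IsDetermined (σ : ι ≃ Fin m) (S : Finset (ι → Bool)) (z : ι → Bool) (v : ι) : Prop :=
  ∃ b, ∀ z' ∈ S, AgreeBelow σ (σ v) z z' → z' v = b

variable {σ : ι ≃ Fin m}

lemma agreeBelow_zero (y z : ι → Bool) : AgreeBelow σ 0 y z :=
  fun _ h => absurd h (Nat.not_lt_zero _)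

lemma AgreeBelow.congr_left {j : ℕ} {y z : ι → Bool} (h : AgreeBelow σ j y z) (z' : ι → Bool) :
    AgreeBelow σ j z z' ↔ AgreeBelow σ j y z' :=
  ⟨fun h' u hu => (h' u hu).trans (h u hu), fun h' u hu => (h' u hu).trans (h u hu).symm⟩

lemma IsDetermined.congr {S : Finset (ι → Bool)} {y z : ι → Bool} {v : ι}
    (h : AgreeBelow σ (σ v) y z) : IsDetermined σ S z v ↔ IsDetermined σ S y v := by
  simp only [IsDetermined, h.congr_left]

lemma agreeBelow_succ_update [DecidableEq ι] {j : ℕ} (hj : j < m) (y z : ι → Bool) (b : Bool) :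
    AgreeBelow σ (j + 1) (update y (σ.symm ⟨j, hj⟩) b) z ↔
      AgreeBelow σ j y z ∧ z (σ.symm ⟨j, hj⟩) = b := by
  have key : ∀ u, (σ u : ℕ) = j ↔ u = σ.symm ⟨j, hj⟩ := fun u => by
    rw [Equiv.eq_symm_apply, Fin.ext_iff]
  constructor
  · intro h
    refine ⟨fun u hu => ?_, by simpa using h (σ.symm ⟨j, hj⟩) (by simp)⟩
    rw [h u (by omega), update_of_ne ((key u).not.mp hu.ne)]
  · rintro ⟨h, hb⟩ u hu
    rcases (Nat.lt_succ_iff_lt_or_eq.mp hu) with hu | hu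
    · rw [h u hu, update_of_ne ((key u).not.mp hu.ne)]
    · rw [(key u).mp hu, hb, update_self]

lemma agreeBelow_update_iff [DecidableEq ι] {j : ℕ} (hj : j < m) (y z : ι → Bool) (c : Bool) :
    AgreeBelow σ j y (update z (σ.symm ⟨j, hj⟩) c) ↔ AgreeBelow σ j y z := by
  refine forall_congr' fun u => imp_congr_right fun hu => ?_
  rw [update_of_ne]
  rintro rfl
  simp at hu

variable [Fintype ι]

instance (σ : ι ≃ Fin m) (j : ℕ) (y : ι → Bool) : DecidablePred (AgreeBelow σ j y) :=
  fun z => inferInstanceAs (Decidable (∀ u, (σ u : ℕ) < j → z u = y u))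

instance (σ : ι ≃ Fin m) (S : Finset (ι → Bool)) (z : ι → Bool) :
    DecidablePred (IsDetermined σ S z) :=
  fun v => inferInstanceAs (Decidable (∃ b, ∀ z' ∈ S, AgreeBelow σ (σ v) z z' → z' v = b))

variable [DecidableEq ι]

lemma sum_agreeBelow_eq_sum_bool {j : ℕ} (hj : j < m) (s : Finset (ι → Bool)) (y : ι → Bool)
    (f : (ι → Bool) → ℝ) :
    ∑ z ∈ s with AgreeBelow σ j y z, f z =
      ∑ b : Bool, ∑ z ∈ s with AgreeBelow σ (j + 1) (update y (σ.symm ⟨j, hj⟩) b) z, f z := by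
  rw [← sum_fiberwise _ (· (σ.symm ⟨j, hj⟩))]
  refine Fintype.sum_congr _ _ fun b => ?_
  rw [filter_filter]
  simp only [agreeBelow_succ_update]

end Cylinder

section Kraft

variable {ι : Type*} [Fintype ι] [DecidableEq ι] {m : ℕ} (σ : ι ≃ Fin m)
  {α : ℝ} {D : (ι → Bool) → ℝ}

lemma sum_agreeBelow_update_le (hL : LogLipschitz α D) (hα : 1 ≤ α) (hD : ∀ x, 0 < D x)
    {j : ℕ} (hj : j < m) (y : ι → Bool) (b : Bool) :
    ∑ z with AgreeBelow σ (j + 1) (update y (σ.symm ⟨j, hj⟩) b) z, D z ≤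
      α * ∑ z with AgreeBelow σ (j + 1) (update y (σ.symm ⟨j, hj⟩) (!b)) z, D z := by
  set w := σ.symm ⟨j, hj⟩
  have hflip : ∀ c z, z ∈ ({z | AgreeBelow σ (j + 1) (update y w c) z} : Finset _) ↔
      AgreeBelow σ j y z ∧ z w = c := fun c z => by
    simp only [mem_filter, mem_univ, true_and, w, agreeBelow_succ_update]
  have hw : ∀ (z : ι → Bool) (c : Bool), z w = b → update (update z w c) w b = z :=
    fun z c hz => by
      rw [update_idem, ← hz, update_eq_self]
  rw [mul_sum]
  calc ∑ z with AgreeBelow σ (j + 1) (update y w b) z, D z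
      ≤ ∑ z with AgreeBelow σ (j + 1) (update y w b) z, α * D (update z w (!b)) := by
        refine sum_le_sum fun z hz => ?_
        have h := hL.apply_update_le hα hD (update z w (!b)) w b
        rwa [hw z _ ((hflip b z).1 hz).2] at h
    _ = _ := by
        refine sum_nbij' (update · w (!b)) (update · w b) (fun z hz => ?_) (fun z hz => ?_)
          (fun z hz => hw z _ ((hflip b z).1 hz).2) (fun z hz => ?_) fun _ _ => rfl
        · have hz := (hflip b z).1 hz
          exact (hflip _ _).2 ⟨(agreeBelow_update_iff hj y z _).2 hz.1, update_self ..⟩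
        · have hz := (hflip _ z).1 hz
          exact (hflip _ _).2 ⟨(agreeBelow_update_iff hj y z _).2 hz.1, update_self ..⟩
        · rw [update_idem, ← ((hflip _ z).1 hz).2, update_eq_self]

lemma one_add_div_mul_sum_agreeBelow_update_le (hL : LogLipschitz α D) (hα : 1 ≤ α)
    (hD : ∀ x, 0 < D x) {j : ℕ} (hj : j < m) (y : ι → Bool) (b : Bool) :
    (1 + α) / α * ∑ z with AgreeBelow σ (j + 1) (update y (σ.symm ⟨j, hj⟩) b) z, D z ≤
      ∑ z with AgreeBelow σ j y z, D z := by
  have hsplit := sum_agreeBelow_eq_sum_bool (σ := σ) hj univ y D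
  have hle := sum_agreeBelow_update_le σ hL hα hD hj y b
  rw [Fintype.sum_bool] at hsplit
  rw [div_mul_eq_mul_div, div_le_iff₀ (by linarith)]
  cases b <;> simp only [Bool.not_true, Bool.not_false] at hle <;> nlinarith

lemma card_filter_le_and_eq_add_ite {j : ℕ} (hj : j < m) (p : ι → Prop) [DecidablePred p] :
    #{v | j ≤ (σ v : ℕ) ∧ p v} =
      #{v | j + 1 ≤ (σ v : ℕ) ∧ p v} + if p (σ.symm ⟨j, hj⟩) then 1 else 0 := by
  have key : ∀ v, (σ v : ℕ) = j ↔ σ.symm ⟨j, hj⟩ = v := fun v => by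
    rw [Equiv.symm_apply_eq, Fin.ext_iff, eq_comm]
  rw [card_filter, card_filter,
    ← sum_ite_eq_of_mem univ (σ.symm ⟨j, hj⟩) (fun v => if p v then 1 else 0) (mem_univ _),
    ← sum_add_distrib]
  refine sum_congr rfl fun v _ => ?_
  have := key v
  split_ifs <;> grind

lemma sum_agreeBelow_mul_pow_card_isDetermined_le (hL : LogLipschitz α D) (hα : 1 ≤ α)
    (hD : ∀ x, 0 < D x) (S : Finset (ι → Bool)) {j : ℕ} (hj : j ≤ m) (y : ι → Bool) :
    ∑ z ∈ S with AgreeBelow σ j y z,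
        D z * ((1 + α) / α) ^ #{v | j ≤ (σ v : ℕ) ∧ IsDetermined σ S z v} ≤
      ∑ z with AgreeBelow σ j y z, D z := by
  induction hj using Nat.decreasingInduction generalizing y with
  | self =>
    have hempty : ∀ z, #{v | m ≤ (σ v : ℕ) ∧ IsDetermined σ S z v} = 0 := fun z =>
      card_eq_zero.2 (filter_eq_empty_iff.2 fun v _ h => (σ v).isLt.not_ge h.1)
    simp only [hempty, pow_zero, mul_one]
    exact sum_le_sum_of_subset_of_nonneg (filter_subset_filter _ (subset_univ S))
      fun z _ _ => (hD z).le
  | of_succ j hj ih =>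
    set w := σ.symm ⟨j, hj⟩ with hw
    have hwj : ((σ w : Fin m) : ℕ) = j := by simp [w]
    have hcount : ∀ z, AgreeBelow σ j y z →
        #{v | j ≤ (σ v : ℕ) ∧ IsDetermined σ S z v} =
          #{v | j + 1 ≤ (σ v : ℕ) ∧ IsDetermined σ S z v} +
            if IsDetermined σ S y w then 1 else 0 := fun z hz => by
      rw [card_filter_le_and_eq_add_ite σ hj, ← hw]
      simp only [IsDetermined.congr (hwj ▸ hz)]
    have hagree : ∀ b z, AgreeBelow σ (j + 1) (update y w b) z → AgreeBelow σ j y z :=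
      fun b z hz => ((agreeBelow_succ_update hj y z b).1 hz).1
    by_cases hdet : IsDetermined σ S y w
    · -- only the branch `b` forced by `hdet` meets `S`, and it carries at most `α / (1 + α)`
      -- of the mass of the cylinder
      obtain ⟨b, hb⟩ := id hdet
      have hS : ∀ z ∈ S, AgreeBelow σ j y z ↔ AgreeBelow σ (j + 1) (update y w b) z :=
        fun z hz => by
          rw [agreeBelow_succ_update]
          exact ⟨fun h => ⟨h, hb z hz (hwj ▸ h)⟩, And.left⟩
      rw [filter_congr hS]
      calc _ = (1 + α) / α * ∑ z ∈ S with AgreeBelow σ (j + 1) (update y w b) z,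
              D z * ((1 + α) / α) ^ #{v | j + 1 ≤ (σ v : ℕ) ∧ IsDetermined σ S z v} := by
            rw [mul_sum]
            refine sum_congr rfl fun z hz => ?_
            rw [hcount z (hagree b z (mem_filter.1 hz).2), if_pos hdet, pow_succ]
            ring
        _ ≤ (1 + α) / α * ∑ z with AgreeBelow σ (j + 1) (update y w b) z, D z :=
            mul_le_mul_of_nonneg_left (ih _) (div_pos (by linarith) (by linarith)).le
        _ ≤ _ := one_add_div_mul_sum_agreeBelow_update_le σ hL hα hD hj y b
    · rw [sum_agreeBelow_eq_sum_bool hj S y, sum_agreeBelow_eq_sum_bool hj univ y]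
      refine sum_le_sum fun b _ => (le_of_eq (sum_congr rfl fun z hz => ?_)).trans (ih _)
      rw [hcount z (hagree b z (mem_filter.1 hz).2), if_neg hdet, add_zero]

theorem sum_mul_pow_card_isDetermined_le_one (hD : IsDistribution D) (hL : LogLipschitz α D)
    (hα : 1 ≤ α) (S : Finset (ι → Bool)) :
    ∑ z ∈ S, D z * ((1 + α) / α) ^ #{v | IsDetermined σ S z v} ≤ 1 := by
  have h := sum_agreeBelow_mul_pow_card_isDetermined_le σ hL hα hD.1 S (Nat.zero_le m)
    (fun _ => true)
  simpa only [agreeBelow_zero, filter_true, zero_le, true_and, hD.2] using h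

end Kraft

lemma card_filter_perm_lt_mul_card {α : Type*} [Fintype α] [LinearOrder α] (T : Finset α)
    {v : α} (hv : v ∈ T) :
    #{π : Equiv.Perm α | ∀ u ∈ T, u ≠ v → π u < π v} * #T = Fintype.card (Equiv.Perm α) := by
  set A : α → Finset (Equiv.Perm α) := fun v => {π | ∀ u ∈ T, u ≠ v → π u < π v}
  have hswap : ∀ {v v'}, v ∈ T → v' ∈ T → ∀ π ∈ A v, π * Equiv.swap v v' ∈ A v' := by
    intro v v' hv hv' π hπ
    simp only [A, mem_filter, mem_univ, true_and, Equiv.Perm.mul_apply, Equiv.swap_apply_right]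
      at hπ ⊢
    intro u hu huv'
    by_cases huv : u = v
    · subst huv
      rw [Equiv.swap_apply_left]
      exact hπ v' hv' (Ne.symm huv')
    · rw [Equiv.swap_apply_of_ne_of_ne huv huv']
      exact hπ u hu huv
  have hsame : ∀ v' ∈ T, #(A v') = #(A v) := fun v' hv' =>
    card_nbij' (· * Equiv.swap v' v) (· * Equiv.swap v v') (hswap hv' hv) (hswap hv hv')
      (fun π _ => by dsimp only; rw [mul_assoc, Equiv.swap_comm v' v, Equiv.swap_mul_self, mul_one])
      (fun π _ => by dsimp only; rw [mul_assoc, Equiv.swap_comm v v', Equiv.swap_mul_self, mul_one])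
  have hcover : T.biUnion A = univ := eq_univ_of_forall fun π => by
    obtain ⟨w, hw, hmax⟩ := exists_max_image T π ⟨v, hv⟩
    exact mem_biUnion.2 ⟨w, hw, mem_filter.2 ⟨mem_univ _, fun u hu huw =>
      (hmax u hu).lt_of_ne (π.injective.ne huw)⟩⟩
  have hdisj : (T : Set α).PairwiseDisjoint A := by
    intro u hu u' hu' huu'
    refine disjoint_left.2 fun π hπ hπ' => ?_
    simp only [A, mem_filter, mem_univ, true_and] at hπ hπ'
    exact (hπ u' hu' (Ne.symm huu')).asymm (hπ' u hu huu')
  have hcard : Fintype.card (Equiv.Perm α) = #(T.biUnion A) := by rw [hcover, card_univ]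
  rw [hcard, card_biUnion hdisj, sum_congr rfl hsame, sum_const, smul_eq_mul, mul_comm]

lemma card_mul_rpow_le_sum_rpow {γ : Type*} {s : Finset γ} {b : ℝ} (hb : 1 ≤ b) (x : γ → ℝ)
    {c : ℝ} (hc : #s * c ≤ ∑ i ∈ s, x i) : #s * b ^ c ≤ ∑ i ∈ s, b ^ x i := by
  rcases s.eq_empty_or_nonempty with rfl | hs
  · simp
  have hN : (0 : ℝ) < #s := by exact_mod_cast hs.card_pos
  have hb0 : 0 < b := by linarith
  have hamgm := Real.geom_mean_le_arith_mean_weighted s (fun _ => 1 / #s) (fun i => b ^ x i)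
    (fun _ _ => by positivity) (by simp [hN.ne']) (fun _ _ => by positivity)
  have hprod : ∏ i ∈ s, (b ^ x i) ^ (1 / #s : ℝ) = b ^ ((∑ i ∈ s, x i) / #s) := by
    simp_rw [← Real.rpow_mul hb0.le]
    rw [← Real.rpow_sum_of_pos hb0, ← sum_mul, ← div_eq_mul_one_div]
  rw [hprod, ← mul_sum] at hamgm
  calc #s * b ^ c ≤ #s * b ^ ((∑ i ∈ s, x i) / #s) := by
        gcongr
        rwa [le_div_iff₀ hN, mul_comm]
    _ ≤ #s * (1 / #s * ∑ i ∈ s, b ^ x i) := by gcongr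
    _ = ∑ i ∈ s, b ^ x i := by field_simp

section PPZ

variable {n : ℕ} (φ : CNF n)

instance : DecidablePred (SatCNF φ) :=
  fun x => inferInstanceAs (Decidable (∀ C ∈ φ, ∃ l ∈ C, x l.1 = l.2))

def solutions : Finset (Fin n → Bool) := {z | SatCNF φ z}

def critVars (z : Fin n → Bool) : Finset (Fin n) := {v | ¬SatCNF φ (update z v (!z v))}

variable {φ}

lemma exists_clause_of_mem_critVars {z : Fin n → Bool} (hz : SatCNF φ z) {v : Fin n}
    (hv : v ∈ critVars φ z) :
    ∃ C ∈ φ, (∀ l ∈ C, update z v (!z v) l.1 ≠ l.2) ∧ v ∈ clauseVars C := by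
  simp only [critVars, SatCNF, mem_filter, mem_univ, true_and, not_forall, not_exists,
    not_and] at hv
  obtain ⟨C, hC, hviol⟩ := hv
  obtain ⟨l, hl, hlz⟩ := hz C hC
  refine ⟨C, hC, hviol, mem_image.2 ⟨l, hl, ?_⟩⟩
  by_contra hlv
  exact hviol l hl (by rwa [update_of_ne hlv])

lemma isDetermined_of_clause {π : Equiv.Perm (Fin n)} {z : Fin n → Bool} {v : Fin n}
    {C : Finset (Fin n × Bool)} (hC : C ∈ φ) (hviol : ∀ l ∈ C, update z v (!z v) l.1 ≠ l.2)
    (hlast : ∀ u ∈ clauseVars C, u ≠ v → π u < π v) : IsDetermined π (solutions φ) z v := by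
  refine ⟨z v, fun z' hz' hagree => ?_⟩
  obtain ⟨l, hl, hlz'⟩ := (mem_filter.1 hz').2 C hC
  by_cases hlv : l.1 = v
  · subst hlv
    have h := hviol l hl
    rw [update_self, ne_comm, ← Bool.eq_not, Bool.not_not] at h
    rw [hlz', h]
  · have h := hviol l hl
    rw [update_of_ne hlv, ← hagree l.1 (hlast l.1 (mem_image_of_mem _ hl) hlv)] at h
    exact absurd hlz' h

lemma IsKCNF.card_clauseVars_le {k : ℕ} (hφ : IsKCNF k φ) {C : Finset (Fin n × Bool)}
    (hC : C ∈ φ) : #(clauseVars C) ≤ k :=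
  card_image_le.trans (hφ C hC)

lemma card_perm_mul_card_critVars_le {k : ℕ} (hφ : IsKCNF k φ) {z : Fin n → Bool}
    (hz : SatCNF φ z) :
    Fintype.card (Equiv.Perm (Fin n)) * #(critVars φ z) ≤
      k * ∑ π : Equiv.Perm (Fin n), #{v | IsDetermined π (solutions φ) z v} := by
  choose! C hCφ hviol hvC using fun v (hv : v ∈ critVars φ z) =>
    exists_clause_of_mem_critVars hz hv
  calc Fintype.card (Equiv.Perm (Fin n)) * #(critVars φ z)
      = ∑ v ∈ critVars φ z, Fintype.card (Equiv.Perm (Fin n)) := by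
        rw [sum_const, smul_eq_mul, mul_comm]
    _ ≤ ∑ v ∈ critVars φ z,
          k * #{π : Equiv.Perm (Fin n) | ∀ u ∈ clauseVars (C v), u ≠ v → π u < π v} :=
        sum_le_sum fun v hv => by
          calc Fintype.card (Equiv.Perm (Fin n))
              = #{π : Equiv.Perm (Fin n) | ∀ u ∈ clauseVars (C v), u ≠ v → π u < π v} *
                  #(clauseVars (C v)) :=
                -- `<` on `Fin n` and on a general linear order elaborate to different instances
                by convert (card_filter_perm_lt_mul_card _ (hvC v hv)).symm
            _ ≤ _ := by rw [mul_comm]; gcongr; exact hφ.card_clauseVars_le (hCφ v hv)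
    _ = k * ∑ π : Equiv.Perm (Fin n),
          #{v ∈ critVars φ z | ∀ u ∈ clauseVars (C v), u ≠ v → π u < π v} := by
        rw [← mul_sum]
        simp only [card_filter]
        rw [sum_comm]
    _ ≤ k * ∑ π : Equiv.Perm (Fin n), #{v | IsDetermined π (solutions φ) z v} := by
        gcongr with π
        intro v hv
        obtain ⟨hv, hlast⟩ := mem_filter.1 hv
        exact mem_filter.2 ⟨mem_univ _, isDetermined_of_clause (hCφ v hv) (hviol v hv) hlast⟩

theorem sum_solutions_mul_rpow_card_critVars_le_one {k : ℕ} (hφ : IsKCNF k φ) (hk : 0 < k)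
    {α : ℝ} {D : (Fin n → Bool) → ℝ} (hD : IsDistribution D) (hL : LogLipschitz α D)
    (hα : 1 ≤ α) :
    ∑ z ∈ solutions φ, D z * ((1 + α) / α) ^ ((#(critVars φ z) : ℝ) / k) ≤ 1 := by
  set β := (1 + α) / α
  have hβ : 1 ≤ β := by rw [le_div_iff₀ (by linarith)]; linarith
  set N : ℝ := (Fintype.card (Equiv.Perm (Fin n)) : ℝ)
  have hN : 0 < N := by positivity
  have hz : ∀ z ∈ solutions φ, N * (D z * β ^ ((#(critVars φ z) : ℝ) / k)) ≤
      ∑ π : Equiv.Perm (Fin n), D z * β ^ #{v | IsDetermined π (solutions φ) z v} := by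
    intro z hz
    have hcount := card_perm_mul_card_critVars_le hφ (mem_filter.1 hz).2
    have hjensen := card_mul_rpow_le_sum_rpow (s := univ) hβ
      (fun π => (#{v | IsDetermined π (solutions φ) z v} : ℝ)) (c := #(critVars φ z) / k) (by
        rw [card_univ, mul_div_assoc', div_le_iff₀ (by positivity), mul_comm _ (k : ℝ)]
        exact_mod_cast hcount)
    simp only [card_univ, Real.rpow_natCast] at hjensen
    rw [← mul_sum, mul_left_comm]
    exact mul_le_mul_of_nonneg_left hjensen (hD.1 z).le
  refine le_of_mul_le_mul_left ?_ hN
  calc N * ∑ z ∈ solutions φ, D z * β ^ ((#(critVars φ z) : ℝ) / k)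
      ≤ ∑ z ∈ solutions φ, ∑ π : Equiv.Perm (Fin n),
          D z * β ^ #{v | IsDetermined π (solutions φ) z v} := by
        rw [mul_sum]
        exact sum_le_sum hz
    _ = ∑ π : Equiv.Perm (Fin n), ∑ z ∈ solutions φ,
          D z * β ^ #{v | IsDetermined π (solutions φ) z v} := sum_comm
    _ ≤ ∑ _π : Equiv.Perm (Fin n), (1 : ℝ) :=
        sum_le_sum fun π _ => sum_mul_pow_card_isDetermined_le_one π hD hL hα _
    _ = N * 1 := by simp [N]

end PPZ

section Ball

variable {n : ℕ} {φ : CNF n} {α : ℝ} {D : (Fin n → Bool) → ℝ}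

lemma mem_critVars_of_forall_hammingDist_le {x z : Fin n → Bool}
    (hmin : ∀ z' ∈ solutions φ, hammingDist x z ≤ hammingDist x z') {v : Fin n}
    (hv : x v ≠ z v) : v ∈ critVars φ z := by
  refine mem_filter.2 ⟨mem_univ _, fun hsat => ?_⟩
  rw [(Bool.eq_not.2 hv).symm] at hsat
  exact (hammingDist_update_lt hv).not_ge (hmin _ (mem_filter.2 ⟨mem_univ _, hsat⟩))

lemma pr_ball_le_sum_flipOn (hD : ∀ x, 0 ≤ D x) (R : ℕ) :
    pr D (fun x => ∃ z, hammingDist x z ≤ R ∧ SatCNF φ z) ≤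
      ∑ z ∈ solutions φ, ∑ U ∈ (critVars φ z).powerset with #U ≤ R, D (flipOn U z) := by
  rw [pr_eq_sum_filter, sum_sigma']
  refine (sum_le_sum_of_subset_of_nonneg (fun x hx => ?_) fun _ _ _ => hD _).trans
    (sum_image_le_of_nonneg fun _ _ => hD _)
  obtain ⟨z₀, hd₀, hz₀⟩ := (mem_filter.1 hx).2
  obtain ⟨z, hz, hmin⟩ := exists_min_image (solutions φ) (hammingDist x)
    ⟨z₀, mem_filter.2 ⟨mem_univ _, hz₀⟩⟩
  refine mem_image.2 ⟨⟨z, ({i | x i ≠ z i} : Finset _)⟩, mem_sigma.2 ⟨hz, mem_filter.2 ⟨?_, ?_⟩⟩,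
    flipOn_filter_ne x z⟩
  · exact mem_powerset.2 fun v hv =>
      mem_critVars_of_forall_hammingDist_le hmin (mem_filter.1 hv).2
  · exact (hmin z₀ (mem_filter.2 ⟨mem_univ _, hz₀⟩)).trans hd₀

theorem sq_pr_ball_le {k : ℕ} (hφ : IsKCNF k φ) (hk : 0 < k) (hD : IsDistribution D)
    (hL : LogLipschitz α D) (hα : 1 ≤ α) {t : ℝ} (ht0 : 0 < t) (ht1 : t ≤ 1)
    (ht : (1 + t) ^ 2 ≤ ((1 + α) / α) ^ ((1 : ℝ) / k)) (R : ℕ) :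
    pr D (fun x => ∃ z, hammingDist x z ≤ R ∧ SatCNF φ z) ^ 2 ≤
      ((α / t) ^ 2) ^ R * pr D (SatCNF φ) := by
  set S := solutions φ
  have hball : pr D (fun x => ∃ z, hammingDist x z ≤ R ∧ SatCNF φ z) ≤
      (α / t) ^ R * ∑ z ∈ S, D z * (1 + t) ^ #(critVars φ z) := by
    refine (pr_ball_le_sum_flipOn (fun x => (hD.1 x).le) R).trans ?_
    rw [mul_sum]
    refine sum_le_sum fun z _ => ?_
    linarith [sum_flipOn_powerset_le hL hα hD.1 ht0 ht1 (critVars φ z) z R]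
  have hcs : (∑ z ∈ S, D z * (1 + t) ^ #(critVars φ z)) ^ 2 ≤
      (∑ z ∈ S, D z) * ∑ z ∈ S, D z * ((1 + α) / α) ^ ((#(critVars φ z) : ℝ) / k) := by
    refine sum_sq_le_sum_mul_sum_of_sq_le_mul S (fun z _ => (hD.1 z).le)
      (fun z _ => (mul_pos (hD.1 z) (by positivity)).le) fun z _ => ?_
    have hDz := (hD.1 z).le
    calc (D z * (1 + t) ^ #(critVars φ z)) ^ 2
        = D z * (D z * ((1 + t) ^ 2) ^ #(critVars φ z)) := by
          rw [mul_pow, ← pow_mul, mul_comm _ 2, pow_mul]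
          ring
      _ ≤ D z * (D z * (((1 + α) / α) ^ ((1 : ℝ) / k)) ^ #(critVars φ z)) := by gcongr
      _ = D z * (D z * ((1 + α) / α) ^ ((#(critVars φ z) : ℝ) / k)) := by
          rw [← Real.rpow_natCast, ← Real.rpow_mul (by positivity), one_div_mul_eq_div]
  have hppz := sum_solutions_mul_rpow_card_critVars_le_one hφ hk hD hL hα
  have hp : pr D (SatCNF φ) = ∑ z ∈ S, D z := pr_eq_sum_filter D _
  have hp0 : 0 ≤ ∑ z ∈ S, D z := sum_nonneg fun z _ => (hD.1 z).le
  calc pr D (fun x => ∃ z, hammingDist x z ≤ R ∧ SatCNF φ z) ^ 2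
      ≤ ((α / t) ^ R * ∑ z ∈ S, D z * (1 + t) ^ #(critVars φ z)) ^ 2 :=
        pow_le_pow_left₀ (by rw [pr_eq_sum_filter]; exact sum_nonneg fun x _ => (hD.1 x).le) hball 2
    _ = ((α / t) ^ 2) ^ R * (∑ z ∈ S, D z * (1 + t) ^ #(critVars φ z)) ^ 2 := by ring
    _ ≤ ((α / t) ^ 2) ^ R * ((∑ z ∈ S, D z) * 1) := by
        gcongr
        exact hcs.trans (mul_le_mul_of_nonneg_left hppz hp0)
    _ = ((α / t) ^ 2) ^ R * pr D (SatCNF φ) := by rw [hp, mul_one]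

end Ball

lemma exists_mem_Ioc_one_add_sq_le {x : ℝ} (hx : 1 < x) :
    ∃ t ∈ Set.Ioc (0 : ℝ) 1, (1 + t) ^ 2 ≤ x := by
  have hsqrt : 1 < √x := by rwa [Real.lt_sqrt zero_le_one, one_pow]
  refine ⟨min 1 (√x - 1), ⟨lt_min one_pos (by linarith), min_le_left _ _⟩, ?_⟩
  calc (1 + min 1 (√x - 1)) ^ 2 ≤ √x ^ 2 := by
        gcongr
        linarith [min_le_right 1 (√x - 1)]
    _ = x := Real.sq_sqrt (by linarith)

lemma pow_natLog_mul_rpow_neg_logb_le_one {E : ℝ} (hE : 1 ≤ E) (n : ℕ) :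
    E ^ Nat.log 2 n * (n : ℝ) ^ (-Real.logb 2 E) ≤ 1 := by
  rcases n.eq_zero_or_pos with rfl | hn
  · simpa using Real.zero_rpow_le_one _
  have hn' : (0 : ℝ) < n := by exact_mod_cast hn
  have hpow : E ^ Nat.log 2 n = ((2 : ℝ) ^ Nat.log 2 n) ^ Real.logb 2 E := by
    rw [← Real.rpow_natCast, ← Real.rpow_natCast 2, ← Real.rpow_mul zero_le_two, mul_comm,
      Real.rpow_mul zero_le_two, Real.rpow_logb zero_lt_two (by norm_num) (by linarith)]
  have hle : (2 : ℝ) ^ Nat.log 2 n ≤ n := by exact_mod_cast Nat.pow_log_le_self 2 hn.ne'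
  calc E ^ Nat.log 2 n * (n : ℝ) ^ (-Real.logb 2 E)
      ≤ (n : ℝ) ^ Real.logb 2 E * (n : ℝ) ^ (-Real.logb 2 E) := by
        rw [hpow]
        gcongr
        exact Real.logb_nonneg one_lt_two hE
    _ = 1 := by rw [← Real.rpow_add hn', add_neg_cancel, Real.rpow_zero]

theorem kCNF_log_expansion_bound (α : ℝ) (hα : 1 ≤ α) (k : ℕ) (hk : 1 ≤ k) :
    ∃ C₁ C₂ C₃ C₄ : ℝ, 0 < C₁ ∧ 0 ≤ C₂ ∧ 0 ≤ C₃ ∧ 0 ≤ C₄ ∧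
      ∀ n : ℕ, ∀ φ : CNF n, IsKCNF k φ →
        ∀ D : (Fin n → Bool) → ℝ, IsDistribution D → LogLipschitz α D →
          ∀ ε : ℝ, 0 < ε → ε < 1 / 2 →
            pr D (SatCNF φ) < C₁ * ε ^ C₂ * min (ε ^ C₃) ((n : ℝ) ^ (-C₄)) →
            pr D (fun x => ∃ z, hammingDist x z ≤ Nat.log 2 n ∧ SatCNF φ z) ≤ ε := by
  have hβ : 1 < ((1 + α) / α) ^ ((1 : ℝ) / k) :=
    Real.one_lt_rpow (by rw [lt_div_iff₀ (by linarith)]; linarith) (by positivity)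
  obtain ⟨t, ⟨ht0, ht1⟩, ht⟩ := exists_mem_Ioc_one_add_sq_le hβ
  set E := (α / t) ^ 2
  have hE : 1 ≤ E := one_le_pow₀ ((one_le_div ht0).2 (ht1.trans hα))
  refine ⟨1, 2, 0, Real.logb 2 E, one_pos, zero_le_two, le_rfl, Real.logb_nonneg one_lt_two hE,
    fun n φ hφ D hD hL ε hε _ hp => ?_⟩
  have hsat : pr D (SatCNF φ) ≤ ε ^ 2 * (n : ℝ) ^ (-Real.logb 2 E) := by
    refine hp.le.trans ?_
    rw [one_mul, Real.rpow_two]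
    exact mul_le_mul_of_nonneg_left (min_le_right _ _) (by positivity)
  refine le_of_sq_le_sq ?_ hε.le
  calc pr D (fun x => ∃ z, hammingDist x z ≤ Nat.log 2 n ∧ SatCNF φ z) ^ 2
      ≤ E ^ Nat.log 2 n * pr D (SatCNF φ) := sq_pr_ball_le hφ hk hD hL hα ht0 ht1 ht _
    _ ≤ E ^ Nat.log 2 n * (ε ^ 2 * (n : ℝ) ^ (-Real.logb 2 E)) := by gcongr
    _ = ε ^ 2 * (E ^ Nat.log 2 n * (n : ℝ) ^ (-Real.logb 2 E)) := by ring
    _ ≤ ε ^ 2 := mul_le_of_le_one_right (by positivity) (pow_natLog_mul_rpow_neg_logb_le_one hE n)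
end

section
/- Let c₁ and c₂ be monotone conjunctions over disjoint sets of variables, each of even length l with 3 ≤ l ≤ n/2, and let ρ = l/2. Under the uniform distribution on {0,1}^n, the exact-in-the-ball robust risk satisfies R_ρ(c₁, c₂) ≥ (1 − 2^{−2ρ})/2. -/
open Finset

/-- Exact-in-the-ball robust risk of `h` w.r.t. `c` under weights `D`:
mass of points `x` admitting a perturbation `z` within Hamming distance `ρ`
on which `h` and `c` disagree. -/
noncomputable def robustRisk {n : ℕ} (D : (Fin n → Bool) → ℝ) (ρ : ℕ)
    (h c : (Fin n → Bool) → Bool) : ℝ :=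
  pr D (fun x => ∃ z, hammingDist x z ≤ ρ ∧ h z ≠ c z)

/-- The uniform distribution on `{0,1}ⁿ`. -/
noncomputable def unif (n : ℕ) : (Fin n → Bool) → ℝ := fun _ => ((2 : ℝ) ^ n)⁻¹

/-- `x` satisfies the monotone conjunction with variable set `I`. -/
def SatMC {n : ℕ} (I : Finset (Fin n)) (x : Fin n → Bool) : Prop :=
  ∀ i ∈ I, x i = true

/-- Boolean evaluation of the monotone conjunction with variable set `I`. -/
noncomputable def mcFun {n : ℕ} (I : Finset (Fin n)) : (Fin n → Bool) → Bool :=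
  fun x => decide (∀ i ∈ I, x i = true)


section Helpers
variable {n : ℕ}

open Classical in
lemma pr_eq_card'' (P : (Fin n → Bool) → Prop) :
    pr (unif n) P = ((Finset.univ.filter P).card : ℝ) / 2 ^ n := by
  classical
  rw [pr, ← Finset.sum_filter]
  simp [unif, div_eq_mul_inv]

lemma pr_fixed (I : Finset (Fin n)) (b : Fin n → Bool) :
    pr (unif n) (fun x => ∀ i ∈ I, x i = b i) = ((2:ℝ) ^ (n - I.card)) / 2 ^ n := by
  classical
  have e : {x : Fin n → Bool // ∀ i ∈ I, x i = b i} ≃ ({i : Fin n // i ∉ I} → Bool) :=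
  { toFun := fun x i => x.1 i.1
    invFun := fun g => ⟨fun i => if h : i ∈ I then b i else g ⟨i, h⟩, by
      intro i hi; simp [hi]⟩
    left_inv := by
      intro x; ext i; by_cases h : i ∈ I <;> simp [h]
      exact (x.2 i h).symm
    right_inv := by intro g; ext i; simp [i.2] }
  have hcd : (Finset.univ.filter (fun x : Fin n → Bool => ∀ i ∈ I, x i = b i)).card
      = 2 ^ (n - I.card) := by
    rw [← Fintype.card_subtype, Fintype.card_congr e, Fintype.card_fun]
    congr 1
    simp [Fintype.card_subtype_compl, Fintype.card_coe]
  rw [pr_eq_card'', Finset.filter_congr_decidable, hcd]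
  push_cast
  ring

lemma pr_mono' (P Q : (Fin n → Bool) → Prop) (h : ∀ x, P x → Q x) :
    pr (unif n) P ≤ pr (unif n) Q := by
  classical
  rw [pr, pr]
  apply Finset.sum_le_sum
  intro x _
  have hu : (0:ℝ) ≤ unif n x := by unfold unif; positivity
  by_cases hp : P x
  · simp [hp, h x hp]
  · simp only [hp, if_neg, if_false]
    split <;> simp [hu]

lemma pr_sub' (P Q : (Fin n → Bool) → Prop) :
    pr (unif n) P - pr (unif n) Q ≤ pr (unif n) (fun x => P x ∧ ¬ Q x) := by
  classical
  rw [pr, pr, pr, sub_le_iff_le_add, ← Finset.sum_add_distrib]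
  apply Finset.sum_le_sum
  intro x _
  have hu : (0:ℝ) ≤ unif n x := by unfold unif; positivity
  by_cases hp : P x <;> by_cases hq : Q x <;> simp [hp, hq, hu]

lemma pr_sym' (σ : Equiv.Perm (Fin n → Bool)) (A T : (Fin n → Bool) → Prop)
    (hcov : ∀ x, A x ∨ A (σ x)) (hT : ∀ x, T x → A x ∧ A (σ x)) :
    1 + pr (unif n) T ≤ 2 * pr (unif n) A := by
  classical
  have h2 : pr (unif n) A = pr (unif n) (fun x => A (σ x)) := by
    rw [pr, pr]
    exact (Equiv.sum_comp σ (fun y => if A y then unif n y else 0)).symm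
  have hone : ∑ x : Fin n → Bool, unif n x = 1 := by
    simp only [unif, Finset.sum_const, Finset.card_univ, nsmul_eq_mul]
    rw [Fintype.card_fun]
    simp
  rw [two_mul]
  nth_rewrite 2 [h2]
  rw [pr, pr, pr, ← hone, ← Finset.sum_add_distrib, ← Finset.sum_add_distrib]
  apply Finset.sum_le_sum
  intro x _
  have hu : (0:ℝ) ≤ unif n x := by unfold unif; positivity
  rcases hcov x with h | h
  · by_cases h' : A (σ x)
    · by_cases ht : T x <;> simp [h, h', ht, hu]
    · have : ¬ T x := fun ht => h' (hT x ht).2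
      simp [h, h', this]
  · by_cases h' : A x
    · by_cases ht : T x <;> simp [h, h', ht, hu]
    · have : ¬ T x := fun ht => h' (hT x ht).1
      simp [h, h', this]

end Helpers

theorem disjoint_monotone_conjunctions_robustRisk_lb {n l : ℕ}
    (I₁ I₂ : Finset (Fin n)) (hdisj : Disjoint I₁ I₂)
    (h₁ : I₁.card = l) (h₂ : I₂.card = l)
    (hleven : Even l) (hl3 : 3 ≤ l) (hln : 2 * l ≤ n) :
    robustRisk (unif n) (l / 2) (mcFun I₁) (mcFun I₂) ≥
      (1 - ((2 : ℝ) ^ (2 * (l / 2)))⁻¹) / 2 := by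
  classical
  have hl : 2 * (l / 2) = l := by
    have := Nat.div_two_mul_two_of_even hleven; omega
  set ρ := l / 2 with hρdef
  have hlen : l ≤ n := by omega
  -- the three events
  set d₁ : (Fin n → Bool) → ℕ := fun x => (I₁.filter (fun i => x i = false)).card with hd₁
  set A : (Fin n → Bool) → Prop := fun x => d₁ x ≤ ρ with hA
  set S₂ : (Fin n → Bool) → Prop := fun x => ∀ i ∈ I₂, x i = true with hS₂
  -- d₁ complement count
  have hd₁le : ∀ x, d₁ x ≤ l := by
    intro x
    calc d₁ x ≤ I₁.card := Finset.card_filter_le _ _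
    _ = l := h₁
  -- step 1 : robust risk ≥ pr E
  have step1 : pr (unif n) (fun x => A x ∧ ¬ S₂ x) ≤
      robustRisk (unif n) ρ (mcFun I₁) (mcFun I₂) := by
    rw [robustRisk]
    apply pr_mono'
    rintro x ⟨hAx, hSx⟩
    refine ⟨fun i => if i ∈ I₁ then true else x i, ?_, ?_⟩
    · have hfil : (Finset.univ.filter
          (fun i => x i ≠ (if i ∈ I₁ then true else x i))) =
          I₁.filter (fun i => x i = false) := by
        ext i
        by_cases h : i ∈ I₁ <;> simp [h]
      calc hammingDist x (fun i => if i ∈ I₁ then true else x i)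
          = (Finset.univ.filter
              (fun i => x i ≠ (if i ∈ I₁ then true else x i))).card := rfl
        _ = d₁ x := by rw [hfil]
        _ ≤ ρ := hAx
    · have hT : mcFun I₁ (fun i => if i ∈ I₁ then true else x i) = true := by
        simp only [mcFun, decide_eq_true_eq]
        intro i hi
        simp [hi]
      have hF : mcFun I₂ (fun i => if i ∈ I₁ then true else x i) = false := by
        simp only [hS₂, not_forall] at hSx
        obtain ⟨j, hj, hxj⟩ := hSx
        have hj1 : j ∉ I₁ := Finset.disjoint_right.mp hdisj hj
        simp only [mcFun, decide_eq_false_iff_not, not_forall]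
        exact ⟨j, hj, by simp [hj1, hxj]⟩
      rw [hT, hF]; simp
  -- step 3 : pr S₂ = 2^(n-l)/2^n
  have step3 : pr (unif n) S₂ = ((2:ℝ) ^ (n - l)) / 2 ^ n := by
    rw [hS₂]
    simpa [h₂] using pr_fixed I₂ (fun _ => true)
  -- step 4 : symmetry lower bound for pr A
  have hinv : Function.Involutive
      (fun (x : Fin n → Bool) => fun i => if i ∈ I₁ then !(x i) else x i) := by
    intro x; funext i; by_cases h : i ∈ I₁ <;> simp [h]
  set σ := hinv.toPerm with hσ
  have hσapp : ∀ x i, σ x i = if i ∈ I₁ then !(x i) else x i := fun x i => rfl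
  have key : ∀ x, d₁ (σ x) = l - d₁ x := by
    intro x
    have h1 : (I₁.filter (fun i => σ x i = false)) =
        (I₁.filter (fun i => x i = true)) := by
      ext i
      simp only [Finset.mem_filter, and_congr_right_iff]
      intro hi
      rw [hσapp]
      simp [hi]
    have h2 := Finset.card_filter_add_card_filter_not
      (s := I₁) (p := fun i => x i = false)
    have h3 : (I₁.filter (fun i => ¬ x i = false)) =
        (I₁.filter (fun i => x i = true)) := by
      ext i; simp
    rw [h3, h₁] at h2
    simp only [hd₁, h1]
    omega
  obtain ⟨J, hJsub, hJcard⟩ := Finset.exists_subset_card_eq (s := I₁) (n := ρ) (by rw [h₁]; omega)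
  set T : (Fin n → Bool) → Prop :=
    fun x => ∀ i ∈ I₁, x i = decide (i ∈ J) with hTdef
  have hT : ∀ x, T x → A x ∧ A (σ x) := by
    intro x hx
    have hdeq : d₁ x = ρ := by
      have hfe : (I₁.filter (fun i => x i = false)) = I₁ \ J := by
        ext i
        simp only [Finset.mem_filter, Finset.mem_sdiff, and_congr_right_iff]
        intro hi
        rw [hx i hi]
        by_cases h : i ∈ J <;> simp [h]
      rw [hd₁]
      simp only [hfe]
      rw [Finset.card_sdiff_of_subset hJsub, h₁, hJcard]
      omega
    constructor
    · show d₁ x ≤ ρ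
      omega
    · show d₁ (σ x) ≤ ρ
      rw [key]; omega
  have hcov : ∀ x, A x ∨ A (σ x) := by
    intro x
    rw [hA]
    simp only [key]
    have := hd₁le x
    omega
  have hTpr : pr (unif n) T = ((2:ℝ) ^ (n - l)) / 2 ^ n := by
    rw [hTdef]
    simpa [h₁] using pr_fixed I₁ (fun i => decide (i ∈ J))
  have step4 : 1 + ((2:ℝ) ^ (n - l)) / 2 ^ n ≤ 2 * pr (unif n) A := by
    rw [← hTpr]
    exact pr_sym' σ A T hcov hT
  -- combine
  have step2 := pr_sub' A S₂
  have hq : ((2:ℝ) ^ (n - l)) / 2 ^ n = ((2:ℝ) ^ l)⁻¹ := by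
    rw [div_eq_iff (by positivity), inv_mul_eq_div, eq_div_iff (by positivity),
      ← pow_add]
    congr 1
    omega
  rw [hl]
  rw [hq] at step4
  have : (1 - ((2:ℝ) ^ l)⁻¹) / 2 ≤ pr (unif n) (fun x => A x ∧ ¬ S₂ x) := by
    rw [step3, hq] at step2
    nlinarith [step2, step4]
  exact le_trans this step1
end
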